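/- Let H be the graph whose vertices are all labeled d-out-regular directed graphs on n vertices (every vertex has out-degree exactly d), with G₁ ~ G₂ iff G₂ is obtained from G₁ by changing the out-neighborhood of exactly one vertex, equipped with the uniform lazy walk m_G(G') = 1/(n(C(n-1,d)-1)+1) on closed neighborhoods. Then the uniform distribution ν(G) = C(n-1,d)^{-n} is invariant, and the Ricci curvature satisfies κ(G₁, G₂) ≥ 1/n for all G₁, G₂. -/

import Mathlib

open scoped Classical

open Finset

/-- A probability vector on a finite set. -/
def IsProbVec {V : Type*} [Fintype V] (m : V → ℝ) : Prop :=
  (∀ x, 0 ≤ m x) ∧ ∑ x, m x = 1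

/-- A coupling between two probability vectors. -/
def IsCoupling {V : Type*} [Fintype V] (m₁ m₂ : V → ℝ) (A : V → V → ℝ) : Prop :=
  (∀ x y, 0 ≤ A x y) ∧ (∀ x, ∑ y, A x y = m₁ x) ∧ (∀ y, ∑ x, A x y = m₂ y)

/-- The L¹-Wasserstein (transportation) distance between two probability vectors,
with respect to the graph metric. -/
noncomputable def Wdist {V : Type*} [Fintype V] (G : SimpleGraph V) (m₁ m₂ : V → ℝ) : ℝ :=
  sInf {s | ∃ A : V → V → ℝ, IsCoupling m₁ m₂ A ∧
    s = ∑ x, ∑ y, A x y * (G.dist x y : ℝ)}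

/-- A random walk on a graph: at each vertex a probability measure supported on
the closed neighborhood. -/
def IsRandomWalk {V : Type*} [Fintype V] (G : SimpleGraph V) (m : V → V → ℝ) : Prop :=
  ∀ x, IsProbVec (m x) ∧ ∀ y, m x y ≠ 0 → y = x ∨ G.Adj x y

/-- Ollivier's Ricci curvature `κ(x,y) = 1 - W(m_x, m_y)/d(x,y)`. -/
noncomputable def ricci {V : Type*} [Fintype V] (G : SimpleGraph V) (m : V → V → ℝ)
    (x y : V) : ℝ :=
  1 - Wdist G (m x) (m y) / (G.dist x y : ℝ)

/-- The averaging operator `(Mf)(x) = ∑_y f(y)·m_x(y)`. -/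
def Mop {V : Type*} [Fintype V] (m : V → V → ℝ) (f : V → ℝ) : V → ℝ :=
  fun x => ∑ y, f y * m x y

/-- `d`-out-regular directed graphs on `n` vertices: each vertex is assigned a
`d`-element set of out-neighbors among the other vertices. -/
def OutReg (n d : ℕ) := {F : Fin n → Finset (Fin n) // ∀ v, v ∉ F v ∧ (F v).card = d}

instance (n d : ℕ) : Fintype (OutReg n d) := by unfold OutReg; infer_instance
instance (n d : ℕ) : DecidableEq (OutReg n d) := by unfold OutReg; infer_instance

/-- Two `d`-out-regular graphs are adjacent iff one is obtained from the other by
changing the out-neighborhood of exactly one vertex. -/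
def outRegGraph (n d : ℕ) : SimpleGraph (OutReg n d) where
  Adj F₁ F₂ := F₁ ≠ F₂ ∧ ∃ v : Fin n, ∀ u : Fin n, u ≠ v → F₁.val u = F₂.val u
  symm := ⟨fun _ _ h => ⟨h.1.symm, h.2.imp fun _ hv u hu => (hv u hu).symm⟩⟩
  loopless := ⟨fun F h => h.1 rfl⟩

/-- The lazy uniform walk on `d`-out-regular graphs, uniform on closed
neighborhoods with mass `1/(n(C(n-1,d)-1)+1)`. -/
noncomputable def outRegWalk (n d : ℕ) : OutReg n d → OutReg n d → ℝ :=
  fun F F' =>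
    if F = F' ∨ (outRegGraph n d).Adj F F' then
      1 / ((n * ((n - 1).choose d - 1) : ℕ) + 1 : ℝ)
    else 0

/-!
The walk is symmetric and every closed neighbourhood has exactly `n (C(n-1,d) - 1) + 1`
elements, so the rows and columns of the transition matrix sum to one and the uniform
distribution is invariant.

For the curvature, path coupling reduces the bound to adjacent `F₁, F₂`, which differ only at
a vertex `v`. Exchanging the two out-neighbourhoods `F₁ v ↔ F₂ v` is an automorphism of the
graph carrying `F₁` to `F₂`; precomposed with the transposition of `F₁` and `F₂`, it becomes
a bijection transporting `m_{F₁}` to `m_{F₂}` that fixes the `C(n-1,d)` graphs agreeing with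
`F₁` off `v` (the re-randomizations of `v`) and moves every other graph at most one step.
Hence `W(m_{F₁}, m_{F₂}) ≤ 1 - C(n-1,d) / (n (C(n-1,d) - 1) + 1) ≤ 1 - 1/n`.
-/

section Transport

variable {V : Type*} [Fintype V]

noncomputable def transportCost (G : SimpleGraph V) (A : V → V → ℝ) : ℝ :=
  ∑ x, ∑ y, A x y * (G.dist x y : ℝ)

/-- Where `μ₂ y = 0` the junk value of the division is harmless: both couplings vanish there. -/
noncomputable def couplingComp (A₁ A₂ : V → V → ℝ) (μ₂ : V → ℝ) : V → V → ℝ :=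
  fun x z => ∑ y, A₁ x y * A₂ y z / μ₂ y

namespace IsCoupling

variable {μ₁ μ₂ μ₃ : V → ℝ} {A A₁ A₂ : V → V → ℝ}

lemma le_left (h : IsCoupling μ₁ μ₂ A) (x y : V) : A x y ≤ μ₁ x :=
  h.2.1 x ▸ single_le_sum (fun z _ => h.1 x z) (mem_univ y)

lemma le_right (h : IsCoupling μ₁ μ₂ A) (x y : V) : A x y ≤ μ₂ y :=
  h.2.2 y ▸ single_le_sum (fun z _ => h.1 z y) (mem_univ x)

lemma nonneg_right (h : IsCoupling μ₁ μ₂ A) (y : V) : 0 ≤ μ₂ y :=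
  h.2.2 y ▸ sum_nonneg fun x _ => h.1 x y

lemma sum_mul_div_right (h₁ : IsCoupling μ₁ μ₂ A₁) (h₂ : IsCoupling μ₂ μ₃ A₂) (x y : V) :
    ∑ z, A₁ x y * A₂ y z / μ₂ y = A₁ x y := by
  rcases eq_or_ne (μ₂ y) 0 with hy | hy
  · simp [le_antisymm (hy ▸ h₁.le_right x y) (h₁.1 x y)]
  · rw [← sum_div, ← mul_sum, h₂.2.1 y, mul_div_cancel_right₀ _ hy]

lemma sum_mul_div_left (h₁ : IsCoupling μ₁ μ₂ A₁) (h₂ : IsCoupling μ₂ μ₃ A₂) (y z : V) :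
    ∑ x, A₁ x y * A₂ y z / μ₂ y = A₂ y z := by
  rcases eq_or_ne (μ₂ y) 0 with hy | hy
  · simp [le_antisymm (hy ▸ h₂.le_left y z) (h₂.1 y z)]
  · rw [← sum_div, ← sum_mul, h₁.2.2 y, mul_div_cancel_left₀ _ hy]

lemma comp (h₁ : IsCoupling μ₁ μ₂ A₁) (h₂ : IsCoupling μ₂ μ₃ A₂) :
    IsCoupling μ₁ μ₃ (couplingComp A₁ A₂ μ₂) := by
  refine ⟨fun x z => sum_nonneg fun y _ =>
    div_nonneg (mul_nonneg (h₁.1 x y) (h₂.1 y z)) (h₁.nonneg_right y), fun x => ?_, fun z => ?_⟩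
  · simp only [couplingComp]
    rw [sum_comm, sum_congr rfl fun y _ => sum_mul_div_right h₁ h₂ x y, h₁.2.1 x]
  · simp only [couplingComp]
    rw [sum_comm, sum_congr rfl fun y _ => sum_mul_div_left h₁ h₂ y z, h₂.2.2 z]

lemma sum_comp_mul_le (h₁ : IsCoupling μ₁ μ₂ A₁) (h₂ : IsCoupling μ₂ μ₃ A₂) (ρ : V → V → ℝ)
    (hρ : ∀ x y z, ρ x z ≤ ρ x y + ρ y z) :
    ∑ x, ∑ z, couplingComp A₁ A₂ μ₂ x z * ρ x z ≤
      ∑ x, ∑ y, A₁ x y * ρ x y + ∑ y, ∑ z, A₂ y z * ρ y z := by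
  set w : V → V → V → ℝ := fun x y z => A₁ x y * A₂ y z / μ₂ y
  have hw : ∀ x y z, 0 ≤ w x y z := fun x y z =>
    div_nonneg (mul_nonneg (h₁.1 x y) (h₂.1 y z)) (h₁.nonneg_right y)
  calc ∑ x, ∑ z, couplingComp A₁ A₂ μ₂ x z * ρ x z
      ≤ ∑ x, ∑ z, ∑ y, (w x y z * ρ x y + w x y z * ρ y z) := by
        gcongr with x _ z _
        rw [couplingComp, sum_mul]
        gcongr with y _
        rw [← mul_add]
        exact mul_le_mul_of_nonneg_left (hρ x y z) (hw x y z)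
    _ = ∑ x, ∑ y, (∑ z, w x y z) * ρ x y + ∑ y, ∑ z, (∑ x, w x y z) * ρ y z := by
        simp only [sum_add_distrib, sum_mul]
        congr 1
        · exact sum_congr rfl fun x _ => sum_comm
        · rw [sum_comm]
          conv_rhs => rw [sum_comm]
          exact sum_congr rfl fun z _ => sum_comm
    _ = ∑ x, ∑ y, A₁ x y * ρ x y + ∑ y, ∑ z, A₂ y z * ρ y z := by
        simp only [w, sum_mul_div_right h₁ h₂, sum_mul_div_left h₁ h₂]

end IsCoupling

lemma IsProbVec.isCoupling_mul {μ ν : V → ℝ} (hμ : IsProbVec μ) (hν : IsProbVec ν) :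
    IsCoupling μ ν fun x y => μ x * ν y :=
  ⟨fun x y => mul_nonneg (hμ.1 x) (hν.1 y), fun x => by rw [← mul_sum, hν.2, mul_one],
    fun y => by rw [← sum_mul, hμ.2, one_mul]⟩

variable {G : SimpleGraph V} {μ ν : V → ℝ}

lemma Wdist_le_transportCost {A : V → V → ℝ} (h : IsCoupling μ ν A) :
    Wdist G μ ν ≤ transportCost G A :=
  csInf_le ⟨0, by
    rintro _ ⟨A', hA', rfl⟩
    exact sum_nonneg fun x _ => sum_nonneg fun y _ => mul_nonneg (hA'.1 x y) (Nat.cast_nonneg _)⟩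
    ⟨A, h, rfl⟩

lemma le_Wdist (hμ : IsProbVec μ) (hν : IsProbVec ν) {b : ℝ}
    (h : ∀ A, IsCoupling μ ν A → b ≤ transportCost G A) : b ≤ Wdist G μ ν :=
  le_csInf ⟨_, _, hμ.isCoupling_mul hν, rfl⟩ (by rintro _ ⟨A, hA, rfl⟩; exact h A hA)

lemma Wdist_triangle (hG : G.Connected) {μ₁ μ₂ μ₃ : V → ℝ} (h₁ : IsProbVec μ₁)
    (h₂ : IsProbVec μ₂) (h₃ : IsProbVec μ₃) :
    Wdist G μ₁ μ₃ ≤ Wdist G μ₁ μ₂ + Wdist G μ₂ μ₃ := by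
  have hglue : ∀ A₁ A₂, IsCoupling μ₁ μ₂ A₁ → IsCoupling μ₂ μ₃ A₂ →
      Wdist G μ₁ μ₃ ≤ transportCost G A₁ + transportCost G A₂ := fun A₁ A₂ hA₁ hA₂ =>
    (Wdist_le_transportCost (hA₁.comp hA₂)).trans <| hA₁.sum_comp_mul_le hA₂ _ fun x y z => by
      exact_mod_cast hG.dist_triangle
  suffices Wdist G μ₁ μ₃ - Wdist G μ₂ μ₃ ≤ Wdist G μ₁ μ₂ by linarith
  refine le_Wdist h₁ h₂ fun A₁ hA₁ => sub_le_iff_le_add.mpr ?_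
  rw [add_comm, ← sub_le_iff_le_add]
  exact le_Wdist h₂ h₃ fun A₂ hA₂ => sub_le_iff_le_add.mpr (by linarith [hglue A₁ A₂ hA₁ hA₂])

lemma Wdist_le_of_equiv (hμ : ∀ x, 0 ≤ μ x) (T : V ≃ V) (hT : ∀ x, ν (T x) = μ x) :
    Wdist G μ ν ≤ ∑ x, μ x * G.dist x (T x) := by
  have hA : IsCoupling μ ν fun x y => if y = T x then μ x else 0 := by
    refine ⟨fun x y => ite_nonneg (hμ x) le_rfl, fun x => by simp, fun y => ?_⟩
    simp [← T.symm_apply_eq, ← hT]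
  refine (Wdist_le_transportCost hA).trans_eq ?_
  simp [transportCost, ite_mul]

lemma Wdist_le_one_sub_of_equiv (hμ : IsProbVec μ) (T : V ≃ V) (hT : ∀ x, ν (T x) = μ x)
    (Z : Finset V) (hZ : ∀ x ∈ Z, T x = x) (hT₁ : ∀ x, G.dist x (T x) ≤ 1) :
    Wdist G μ ν ≤ 1 - ∑ x ∈ Z, μ x := by
  refine (Wdist_le_of_equiv hμ.1 T hT).trans ?_
  calc ∑ x, μ x * (G.dist x (T x) : ℝ)
      = ∑ x ∈ univ \ Z, μ x * (G.dist x (T x) : ℝ) := by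
        rw [← sum_sdiff (subset_univ Z), add_eq_left]
        exact sum_eq_zero fun x hx => by simp [hZ x hx]
    _ ≤ ∑ x ∈ univ \ Z, μ x :=
        sum_le_sum fun x _ => mul_le_of_le_one_right (hμ.1 x) (by exact_mod_cast hT₁ x)
    _ = 1 - ∑ x ∈ Z, μ x := by rw [sum_sdiff_eq_sub (subset_univ Z), hμ.2]

lemma Wdist_self_nonpos (hμ : ∀ x, 0 ≤ μ x) : Wdist G μ μ ≤ 0 :=
  (Wdist_le_of_equiv hμ (Equiv.refl V) fun _ => rfl).trans_eq (by simp)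

variable {m : V → V → ℝ} {c : ℝ}

lemma Wdist_le_mul_dist (hG : G.Connected) (hm : ∀ x, IsProbVec (m x))
    (hadj : ∀ x y, G.Adj x y → Wdist G (m x) (m y) ≤ c) (x y : V) :
    Wdist G (m x) (m y) ≤ c * G.dist x y := by
  suffices ∀ {x y} (p : G.Walk x y), Wdist G (m x) (m y) ≤ c * p.length by
    obtain ⟨p, hp⟩ := hG.exists_walk_length_eq_dist x y
    exact hp ▸ this p
  intro x y p
  induction p with
  | nil => simpa using Wdist_self_nonpos (hm _).1
  | cons h p ih =>
    calc _ ≤ _ := Wdist_triangle hG (hm _) (hm _) (hm _)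
      _ ≤ c + c * p.length := add_le_add (hadj _ _ h) ih
      _ = _ := by rw [SimpleGraph.Walk.length_cons]; push_cast; ring

lemma ricci_self (x : V) : ricci G m x x = 1 := by
  simp [ricci]

lemma le_ricci (hG : G.Connected) (hm : ∀ x, IsProbVec (m x))
    (hadj : ∀ x y, G.Adj x y → Wdist G (m x) (m y) ≤ c) {x y : V} (hxy : x ≠ y) :
    1 - c ≤ ricci G m x y := by
  have hd : (0 : ℝ) < G.dist x y := by exact_mod_cast hG.pos_dist_of_ne hxy
  rw [ricci, sub_le_sub_iff_left, div_le_iff₀ hd]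
  exact Wdist_le_mul_dist hG hm hadj x y

end Transport

namespace OutReg

variable {n d : ℕ}

lemma ext_of_agree {F G : OutReg n d} {v : Fin n} (h : ∀ u ≠ v, F.val u = G.val u)
    (hv : F.val v = G.val v) : F = G :=
  Subtype.ext <| funext fun u => (eq_or_ne u v).elim (· ▸ hv) (h u)

def update (F : OutReg n d) (v : Fin n) (s : Finset (Fin n)) (hs : v ∉ s ∧ s.card = d) :
    OutReg n d :=
  ⟨Function.update F.val v s, fun u => by
    rcases eq_or_ne u v with rfl | hu
    · simpa using hs
    · simpa [hu] using F.prop u⟩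

@[simp] lemma update_val (F : OutReg n d) (v : Fin n) (s : Finset (Fin n))
    (hs : v ∉ s ∧ s.card = d) : (F.update v s hs).val = Function.update F.val v s := rfl

def fiber (F : OutReg n d) (v : Fin n) : Finset (OutReg n d) :=
  univ.filter fun G => ∀ u ≠ v, G.val u = F.val u

lemma mem_fiber {F G : OutReg n d} {v : Fin n} :
    G ∈ F.fiber v ↔ ∀ u ≠ v, G.val u = F.val u := by
  simp [fiber]

lemma card_fiber (F : OutReg n d) (v : Fin n) : #(F.fiber v) = (n - 1).choose d := by
  have hcard : #(powersetCard d (univ.erase v)) = (n - 1).choose d := by simp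
  rw [← hcard]
  refine card_bij' (fun G _ => G.val v) (fun s hs => F.update v s ?_) (fun G _ => ?_)
    (fun s _ => ?_) (fun G hG => ?_) (fun s _ => ?_)
  · simpa [mem_powersetCard, subset_erase] using hs
  · simpa [mem_powersetCard, subset_erase] using G.prop v
  · simp +contextual [mem_fiber]
  · exact ext_of_agree (v := v) (fun u hu => by simp [hu, (mem_fiber.mp hG) u hu]) (by simp)
  · simp

lemma eq_or_adj_iff {F G : OutReg n d} :
    F = G ∨ (outRegGraph n d).Adj F G ↔ F = G ∨ ∃ v, ∀ u ≠ v, F.val u = G.val u := by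
  simp only [outRegGraph]
  tauto

lemma eq_or_adj_of_agree {F G : OutReg n d} {v : Fin n} (h : ∀ u ≠ v, F.val u = G.val u) :
    F = G ∨ (outRegGraph n d).Adj F G :=
  eq_or_adj_iff.mpr (.inr ⟨v, h⟩)

lemma reachable_of_agree {F G : OutReg n d} (S : Finset (Fin n))
    (h : ∀ u ∉ S, F.val u = G.val u) : (outRegGraph n d).Reachable F G := by
  induction S using Finset.induction_on generalizing F with
  | empty => exact Subtype.ext (funext fun u => h u (notMem_empty u)) ▸ .refl _
  | insert v S _ ih =>
    set F' := F.update v (G.val v) (G.prop v)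
    have hF'G : ∀ u ∉ S, F'.val u = G.val u := fun u hu => by
      rcases eq_or_ne u v with rfl | huv
      · simp [F']
      · simpa [F', huv] using h u (by simp [huv, hu])
    have hFF' : (outRegGraph n d).Reachable F F' :=
      (eq_or_adj_of_agree (v := v) fun u hu => by simp [F', hu]).elim (fun h : F = F' => h ▸ .rfl)
        SimpleGraph.Adj.reachable
    exact hFF'.trans (ih hF'G)

lemma outRegGraph_connected (F : OutReg n d) : (outRegGraph n d).Connected :=
  have : Nonempty (OutReg n d) := ⟨F⟩
  ⟨fun _ _ => reachable_of_agree univ (by simp)⟩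

lemma dist_le_one_of_agree {F G : OutReg n d} {v : Fin n} (h : ∀ u ≠ v, F.val u = G.val u) :
    (outRegGraph n d).dist F G ≤ 1 :=
  (eq_or_adj_of_agree h).elim (fun h => by simp [h])
    fun h => (SimpleGraph.dist_eq_one_iff_adj.mpr h).le

lemma card_filter_eq_or_adj (F : OutReg n d) :
    #(univ.filter fun G => F = G ∨ (outRegGraph n d).Adj F G) =
      n * ((n - 1).choose d - 1) + 1 := by
  have hdecomp : univ.filter (fun G => F = G ∨ (outRegGraph n d).Adj F G) =
      insert F (univ.biUnion fun v => (F.fiber v).erase F) := by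
    ext G
    by_cases hG : G = F
    · simp [hG]
    · simp [eq_or_adj_iff, mem_fiber, hG, Ne.symm hG, eq_comm]
  have hdisj : (Set.univ : Set (Fin n)).PairwiseDisjoint fun v => (F.fiber v).erase F := by
    intro v _ w _ hvw
    refine disjoint_left.mpr fun G hGv hGw => ?_
    rw [mem_erase, mem_fiber] at hGv hGw
    exact hGv.1 (ext_of_agree hGv.2 (hGw.2 v hvw))
  rw [hdecomp, card_insert_of_notMem (by simp), card_biUnion (by simpa using hdisj)]
  simp [card_erase_of_mem (mem_fiber.mpr fun _ _ => rfl), card_fiber, add_comm]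

def swapAt (v : Fin n) (F₁ F₂ G : OutReg n d) : OutReg n d :=
  G.update v (Equiv.swap (F₁.val v) (F₂.val v) (G.val v)) <| by
    rw [Equiv.swap_apply_def]
    split_ifs
    exacts [F₂.prop v, F₁.prop v, G.prop v]

variable {v : Fin n} {F₁ F₂ : OutReg n d}

lemma swapAt_val_of_ne (G : OutReg n d) {u : Fin n} (hu : u ≠ v) :
    (swapAt v F₁ F₂ G).val u = G.val u := by
  simp [swapAt, hu]

lemma swapAt_val_self (G : OutReg n d) :
    (swapAt v F₁ F₂ G).val v = Equiv.swap (F₁.val v) (F₂.val v) (G.val v) := by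
  simp [swapAt]

lemma swapAt_involutive (v : Fin n) (F₁ F₂ : OutReg n d) : Function.Involutive (swapAt v F₁ F₂) :=
  fun G => ext_of_agree (v := v) (fun u hu => by simp [swapAt_val_of_ne _ hu])
    (by simp [swapAt_val_self])

lemma swapAt_val_eq_iff {G G' : OutReg n d} (u : Fin n) :
    (swapAt v F₁ F₂ G).val u = (swapAt v F₁ F₂ G').val u ↔ G.val u = G'.val u := by
  rcases eq_or_ne u v with rfl | hu
  · simp [swapAt_val_self]
  · simp [swapAt_val_of_ne _ hu]

def swapAtIso (v : Fin n) (F₁ F₂ : OutReg n d) : outRegGraph n d ≃g outRegGraph n d where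
  toEquiv := (swapAt_involutive v F₁ F₂).toPerm
  map_rel_iff' := by
    simp [outRegGraph, swapAt_val_eq_iff, (swapAt_involutive v F₁ F₂).injective.ne_iff]

lemma swapAt_of_agree (h : ∀ u ≠ v, F₁.val u = F₂.val u) : swapAt v F₁ F₂ F₁ = F₂ :=
  ext_of_agree (v := v) (fun u hu => by rw [swapAt_val_of_ne _ hu, h u hu])
    (by simp [swapAt_val_self])

lemma swapAt_eq_self {G : OutReg n d} (h₁ : G.val v ≠ F₁.val v) (h₂ : G.val v ≠ F₂.val v) :
    swapAt v F₁ F₂ G = G :=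
  ext_of_agree (v := v) (fun u hu => swapAt_val_of_ne G hu)
    (by rw [swapAt_val_self, Equiv.swap_apply_of_ne_of_ne h₁ h₂])

lemma swap_val_of_ne (hv : ∀ u ≠ v, F₁.val u = F₂.val u) (G : OutReg n d) {u : Fin n} (hu : u ≠ v) :
    (Equiv.swap F₁ F₂ G).val u = G.val u := by
  rw [Equiv.swap_apply_def]
  split_ifs with h₁ h₂
  exacts [h₁ ▸ (hv u hu).symm, h₂ ▸ hv u hu, rfl]

lemma swapAt_swap_of_mem_fiber (hv : ∀ u ≠ v, F₁.val u = F₂.val u) {G : OutReg n d}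
    (hG : G ∈ F₁.fiber v) : swapAt v F₁ F₂ (Equiv.swap F₁ F₂ G) = G := by
  have hG' := mem_fiber.mp hG
  rw [Equiv.swap_apply_def]
  split_ifs with h₁ h₂
  · rw [h₁, ← congrArg (swapAt v F₁ F₂) (swapAt_of_agree hv)]
    exact swapAt_involutive v F₁ F₂ F₁
  · rw [h₂, swapAt_of_agree hv]
  · exact swapAt_eq_self (fun h => h₁ (ext_of_agree hG' h))
      fun h => h₂ (ext_of_agree (fun u hu => (hG' u hu).trans (hv u hu)) h)

end OutReg

section OutRegWalk

variable {n d : ℕ}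

lemma outRegWalk_comm (F G : OutReg n d) : outRegWalk n d F G = outRegWalk n d G F := by
  simp only [outRegWalk, @eq_comm _ F G, (outRegGraph n d).adj_comm F G]

lemma outRegWalk_map (φ : outRegGraph n d ≃g outRegGraph n d) (F G : OutReg n d) :
    outRegWalk n d (φ F) (φ G) = outRegWalk n d F G := by
  simp [outRegWalk, φ.map_adj_iff]

lemma outRegWalk_of_agree {F G : OutReg n d} {v : Fin n} (h : ∀ u ≠ v, F.val u = G.val u) :
    outRegWalk n d F G = 1 / ((n * ((n - 1).choose d - 1) : ℕ) + 1 : ℝ) :=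
  if_pos (OutReg.eq_or_adj_of_agree h)

lemma sum_outRegWalk (F : OutReg n d) : ∑ G, outRegWalk n d F G = 1 := by
  simp only [outRegWalk]
  rw [← sum_filter, sum_const, OutReg.card_filter_eq_or_adj, nsmul_eq_mul]
  push_cast
  field_simp

lemma isProbVec_outRegWalk (F : OutReg n d) : IsProbVec (outRegWalk n d F) :=
  ⟨fun G => by unfold outRegWalk; positivity, sum_outRegWalk F⟩

lemma sum_fiber_outRegWalk (F : OutReg n d) (v : Fin n) :
    ∑ G ∈ F.fiber v, outRegWalk n d F G =
      (n - 1).choose d / ((n * ((n - 1).choose d - 1) : ℕ) + 1 : ℝ) := by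
  rw [sum_congr rfl fun G hG => outRegWalk_of_agree fun u hu => (OutReg.mem_fiber.mp hG u hu).symm,
    sum_const, OutReg.card_fiber, nsmul_eq_mul, mul_one_div]

lemma outRegWalk_swap_of_agree {F₁ F₂ : OutReg n d} {v : Fin n}
    (hv : ∀ u ≠ v, F₁.val u = F₂.val u) (G : OutReg n d) :
    outRegWalk n d F₁ (Equiv.swap F₁ F₂ G) = outRegWalk n d F₁ G := by
  have hF₁ : outRegWalk n d F₁ F₁ = outRegWalk n d F₁ F₂ := by
    rw [outRegWalk_of_agree hv, outRegWalk_of_agree (v := v) fun _ _ => rfl]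
  rw [Equiv.swap_apply_def]
  split_ifs with h₁ h₂
  exacts [h₁ ▸ hF₁.symm, h₂ ▸ hF₁, rfl]

end OutRegWalk

lemma one_div_le_div_mul_sub_one_add_one {n c : ℕ} (hn : 0 < n) (hc : 0 < c) :
    1 / (n : ℝ) ≤ c / ((n * (c - 1) : ℕ) + 1 : ℝ) := by
  rw [div_le_div_iff₀ (by positivity) (by positivity), Nat.cast_mul, Nat.cast_pred hc]
  have : (1 : ℝ) ≤ n := by exact_mod_cast hn
  linarith

lemma Wdist_outRegWalk_le_of_adj {n d : ℕ} {F₁ F₂ : OutReg n d}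
    (h : (outRegGraph n d).Adj F₁ F₂) :
    Wdist (outRegGraph n d) (outRegWalk n d F₁) (outRegWalk n d F₂) ≤ 1 - 1 / n := by
  obtain ⟨-, v, hv⟩ := h
  set τ := OutReg.swapAtIso v F₁ F₂
  have hτ : τ F₁ = F₂ := OutReg.swapAt_of_agree hv
  let T : Equiv.Perm (OutReg n d) := (Equiv.swap F₁ F₂).trans τ.toEquiv
  have hT : ∀ G, outRegWalk n d F₂ (T G) = outRegWalk n d F₁ G := fun G =>
    calc outRegWalk n d F₂ (T G) = outRegWalk n d (τ F₁) (τ (Equiv.swap F₁ F₂ G)) := by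
          rw [hτ]; rfl
      _ = outRegWalk n d F₁ G := (outRegWalk_map τ _ _).trans (outRegWalk_swap_of_agree hv G)
  have hfix : ∀ G ∈ F₁.fiber v, T G = G := fun G hG => OutReg.swapAt_swap_of_mem_fiber hv hG
  have hstep : ∀ G, (outRegGraph n d).dist G (T G) ≤ 1 := fun G =>
    OutReg.dist_le_one_of_agree (v := v) fun u hu =>
      ((OutReg.swapAt_val_of_ne _ hu).trans (OutReg.swap_val_of_ne hv G hu)).symm
  have hC : 0 < (n - 1).choose d :=
    OutReg.card_fiber F₁ v ▸ card_pos.mpr ⟨F₁, OutReg.mem_fiber.mpr fun _ _ => rfl⟩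
  calc _ ≤ 1 - ∑ G ∈ F₁.fiber v, outRegWalk n d F₁ G :=
        Wdist_le_one_sub_of_equiv (isProbVec_outRegWalk F₁) T hT _ hfix hstep
    _ ≤ 1 - 1 / n := by
        rw [sum_fiber_outRegWalk]
        exact sub_le_sub_left (one_div_le_div_mul_sub_one_add_one v.pos hC) 1

/-- The uniform distribution `C(n-1,d)^{-n}` is invariant for the lazy
uniform walk on `d`-out-regular graphs, and the Ricci curvature is at least `1/n` for
all pairs. -/
theorem outReg_invariant_and_ricci (n d : ℕ) :
    (∀ F : OutReg n d,
      ∑ F' : OutReg n d, ((((n - 1).choose d : ℝ)) ^ n)⁻¹ * outRegWalk n d F' F =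
        ((((n - 1).choose d : ℝ)) ^ n)⁻¹) ∧
    (∀ F₁ F₂ : OutReg n d,
      (1 : ℝ) / (n : ℝ) ≤ ricci (outRegGraph n d) (outRegWalk n d) F₁ F₂) := by
  refine ⟨fun F => ?_, fun F₁ F₂ => ?_⟩
  · simp_rw [outRegWalk_comm _ F]
    rw [← mul_sum, sum_outRegWalk, mul_one]
  · rcases eq_or_ne F₁ F₂ with rfl | hne
    · rw [ricci_self, one_div]
      exact Nat.cast_inv_le_one n
    · simpa using le_ricci (OutReg.outRegGraph_connected F₁) isProbVec_outRegWalk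
        (fun _ _ => Wdist_outRegWalk_le_of_adj) hne
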